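/- If P(Z_1 > x) = x^{−β} L(x)(1+o(1)) as x → ∞ with 1 < β < 2 and γ > β − 1, then for every ε > 0, lim_{n→∞} m^{(β−1)n} L(m^n)^{−1} P(m − Z_{n+1}/Z_n ≥ ε) = 0. -/

import Mathlib

/-!
On `{Z_{n+1}/Z_n ≤ m - ε}`, given `Z_n = k`, the `k` independent offspring numbers of generation
`n` sum to at most `(m - ε) k`; by a Chernoff bound with the generating function `f` this has
probability at most `ρ ^ k` for some `ρ < 1`, so the event has probability at most
`E[ρ ^ Z_n] = f^[n] ρ`. Since `p₀ = 0`, `f s ≤ s (p₁ + (1 - p₁) s)`, so `f^[n] ρ = O(rⁿ)` for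
every `r > p₁`, while `1 / L(mⁿ) = O(λⁿ)` for every `λ > 1` as `L` is slowly varying. Finally
`m^(β-1) p₁ = m^(β-1-γ) < 1`, so `r` and `λ` can be chosen with `m^(β-1) λ r < 1`.
-/

open MeasureTheory ProbabilityTheory Filter Set
open scoped Topology ENNReal

/-- Convolution of two measures on `ℝ` (law of the sum of independent random variables). -/
noncomputable def mconv (ν₁ ν₂ : Measure ℝ) : Measure ℝ :=
  (ν₁.prod ν₂).map (fun p => p.1 + p.2)

open Asymptotics

theorem isBigO_pow_of_eventually_le_mul {u : ℕ → ℝ} {r : ℝ} (hr : 0 < r) (hu : ∀ n, 0 ≤ u n)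
    (h : ∀ᶠ n in atTop, u (n + 1) ≤ r * u n) : u =O[atTop] fun n => r ^ n := by
  obtain ⟨N, hN⟩ := eventually_atTop.mp h
  refine .of_bound (u N / r ^ N) (eventually_atTop.mpr ⟨N, fun n hn => ?_⟩)
  obtain ⟨k, rfl⟩ := Nat.exists_eq_add_of_le hn
  rw [Real.norm_of_nonneg (hu _), Real.norm_of_nonneg (by positivity)]
  calc u (N + k) ≤ r ^ k * u N := le_geom (u := fun i => u (N + i)) hr.le k fun i _ =>
        hN (N + i) (by omega)
    _ = u N / r ^ N * r ^ (N + k) := by rw [pow_add]; field_simp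

theorem isBigO_inv_comp_pow_of_tendsto_div {L : ℝ → ℝ} {m lam : ℝ} (hm : 1 < m)
    (hL : ∀ x, 0 < x → 0 < L x) (hLm : Tendsto (fun x => L (m * x) / L x) atTop (𝓝 1))
    (hlam : 1 < lam) : (fun n : ℕ => (L (m ^ n))⁻¹) =O[atTop] fun n => lam ^ n := by
  have hpos (n : ℕ) : 0 < L (m ^ n) := hL _ (pow_pos (by linarith) n)
  refine isBigO_pow_of_eventually_le_mul (by linarith) (fun n => (inv_pos.mpr (hpos n)).le) ?_
  have hratio := hLm.comp (tendsto_pow_atTop_atTop_of_one_lt hm)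
  filter_upwards [hratio.eventually (eventually_gt_nhds (inv_lt_one_of_one_lt₀ hlam))] with n hn
  rw [Function.comp_apply, ← pow_succ', lt_div_iff₀ (hpos n)] at hn
  calc (L (m ^ (n + 1)))⁻¹ ≤ (lam⁻¹ * L (m ^ n))⁻¹ :=
        inv_anti₀ (mul_pos (inv_pos.mpr (by linarith)) (hpos n)) hn.le
    _ = lam * (L (m ^ n))⁻¹ := by rw [mul_inv, inv_inv]

theorem exists_lt_one_lt_mul_mem_Ico {K p : ℝ} (hK : 0 < K) (hp : 0 ≤ p) (hKp : K * p < 1) :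
    ∃ r lam, p < r ∧ 1 < lam ∧ K * lam * r ∈ Ico 0 1 := by
  obtain ⟨r, hpr, hrK⟩ := exists_between ((lt_div_iff₀' hK).mpr hKp)
  have hKr : K * r < 1 := (lt_div_iff₀' hK).mp hrK
  have hr0 : 0 < r := hp.trans_lt hpr
  obtain ⟨lam, hlam1, hlam⟩ := exists_between ((one_lt_div (by positivity)).mpr hKr)
  refine ⟨r, lam, hpr, hlam1, by positivity, ?_⟩
  linarith [(lt_div_iff₀' (by positivity)).mp hlam]

theorem isBigO_iterate_of_le_mul {f : ℝ → ℝ} {a s r : ℝ} (ha0 : 0 ≤ a) (ha1 : a < 1)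
    (hf0 : ∀ x, 0 ≤ x → 0 ≤ f x) (hf : ∀ x, 0 ≤ x → x ≤ 1 → f x ≤ x * (a + (1 - a) * x))
    (hs0 : 0 ≤ s) (hs1 : s < 1) (har : a < r) : (fun n => f^[n] s) =O[atTop] fun n => r ^ n := by
  set u : ℕ → ℝ := fun n => f^[n] s
  have hu_succ : ∀ n, u (n + 1) = f (u n) := fun n => Function.iterate_succ_apply' f n s
  have hu_mem : ∀ n, 0 ≤ u n ∧ u n ≤ s := by
    intro n
    induction n with
    | zero => exact ⟨hs0, le_rfl⟩
    | succ n ih =>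
      rw [hu_succ]
      refine ⟨hf0 _ ih.1, (hf _ ih.1 (by linarith [ih.2])).trans ?_⟩
      nlinarith [mul_nonneg ih.1 (mul_nonneg (sub_nonneg.mpr ha1.le)
        (sub_nonneg.mpr (ih.2.trans hs1.le)))]
  have hu_le : ∀ n, u (n + 1) ≤ u n * (a + (1 - a) * u n) := fun n => by
    rw [hu_succ]; exact hf _ (hu_mem n).1 (by linarith [(hu_mem n).2])
  -- a crude geometric rate first, to get `u n → 0`
  have hc0 : 0 ≤ a + (1 - a) * s := by nlinarith
  have hu_geom : ∀ n, u n ≤ (a + (1 - a) * s) ^ n * s := fun n =>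
    le_geom hc0 n fun k _ => (hu_le k).trans (by
      nlinarith [mul_nonneg (hu_mem k).1 (mul_nonneg (sub_nonneg.mpr ha1.le)
        (sub_nonneg.mpr (hu_mem k).2))])
  have hu_tendsto : Tendsto u atTop (𝓝 0) := by
    refine squeeze_zero (fun n => (hu_mem n).1) hu_geom ?_
    simpa using (tendsto_pow_atTop_nhds_zero_of_lt_one hc0 (by nlinarith)).mul_const s
  have hfactor : Tendsto (fun n => a + (1 - a) * u n) atTop (𝓝 a) := by
    simpa using (hu_tendsto.const_mul (1 - a)).const_add a
  refine isBigO_pow_of_eventually_le_mul (by linarith) (fun n => (hu_mem n).1) ?_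
  filter_upwards [hfactor.eventually (eventually_lt_nhds har)] with n hn
  nlinarith [hu_le n, (hu_mem n).1]

theorem tendsto_one_sub_exp_neg_mul_div (x : ℝ) :
    Tendsto (fun t : ℝ => t⁻¹ * (1 - Real.exp (-(t * x)))) (𝓝[>] 0) (𝓝 x) := by
  have hderiv : HasDerivAt (fun t : ℝ => -Real.exp (-(t * x))) x 0 := by
    simpa using (((hasDerivAt_id (0 : ℝ)).mul_const x).fun_neg.exp).fun_neg
  refine hderiv.tendsto_slope_zero_right.congr fun t => ?_
  simp only [zero_add, zero_mul, neg_zero, Real.exp_zero, smul_eq_mul]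
  ring

namespace ProbabilityTheory

section

variable {Ω : Type*} [MeasurableSpace Ω] {μ : Measure Ω}

theorem IndepFun.integral_comp_eq_integral_integral [IsFiniteMeasure μ]
    {α β : Type*} [MeasurableSpace α] [MeasurableSpace β] {X : Ω → α} {Y : Ω → β}
    (hXY : IndepFun X Y μ) (hX : Measurable X) (hY : Measurable Y) {F : α → β → ℝ}
    (hF : StronglyMeasurable (Function.uncurry F)) {C : ℝ} (hFC : ∀ a b, |F a b| ≤ C) :
    ∫ ω, F (X ω) (Y ω) ∂μ = ∫ ω, ∫ ω', F (X ω) (Y ω') ∂μ ∂μ := by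
  have hint : Integrable (Function.uncurry F) ((μ.map X).prod (μ.map Y)) :=
    .of_bound hF.aestronglyMeasurable C (ae_of_all _ fun p => hFC p.1 p.2)
  calc ∫ ω, F (X ω) (Y ω) ∂μ = ∫ p, Function.uncurry F p ∂(μ.map fun ω => (X ω, Y ω)) :=
        (integral_map (hX.prodMk hY).aemeasurable hF.aestronglyMeasurable).symm
    _ = ∫ a, ∫ b, F a b ∂(μ.map Y) ∂(μ.map X) := by
        rw [(indepFun_iff_map_prod_eq_prod_map_map hX.aemeasurable hY.aemeasurable).mp hXY,
          integral_prod _ hint]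
        rfl
    _ = ∫ ω, ∫ ω', F (X ω) (Y ω') ∂μ ∂μ := by
        rw [integral_map hX.aemeasurable hF.integral_prod_right.aestronglyMeasurable]
        congr with ω
        exact integral_map hY.aemeasurable
          (hF.comp_measurable measurable_prodMk_left).aestronglyMeasurable

theorem identDistrib_of_forall_measureReal_eq [IsFiniteMeasure μ] {X Y : Ω → ℕ}
    (hX : Measurable X) (hY : Measurable Y)
    (h : ∀ k, μ.real {ω | X ω = k} = μ.real {ω | Y ω = k}) : IdentDistrib X Y μ μ where
  aemeasurable_fst := hX.aemeasurable
  aemeasurable_snd := hY.aemeasurable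
  map_eq := Measure.ext_of_singleton fun k => by
    rw [Measure.map_apply hX (measurableSet_singleton k),
      Measure.map_apply hY (measurableSet_singleton k)]
    exact (measureReal_eq_measureReal_iff (measure_ne_top μ _) (measure_ne_top μ _)).mp (h k)

noncomputable def pgf (X : Ω → ℕ) (μ : Measure Ω) (s : ℝ) : ℝ := ∫ ω, s ^ X ω ∂μ

theorem integrable_pow_of_le_one [IsFiniteMeasure μ] {X : Ω → ℕ} (hX : Measurable X) {s : ℝ}
    (hs0 : 0 ≤ s) (hs1 : s ≤ 1) : Integrable (fun ω => s ^ X ω) μ :=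
  .of_mem_Icc 0 1 (measurable_const.pow hX).aemeasurable
    (ae_of_all _ fun _ => ⟨pow_nonneg hs0 _, pow_le_one₀ hs0 hs1⟩)

theorem pgf_nonneg {X : Ω → ℕ} {s : ℝ} (hs : 0 ≤ s) : 0 ≤ pgf X μ s :=
  integral_nonneg fun _ => pow_nonneg hs _

theorem pgf_le_one [IsProbabilityMeasure μ] {X : Ω → ℕ} (hX : Measurable X) {s : ℝ}
    (hs0 : 0 ≤ s) (hs1 : s ≤ 1) : pgf X μ s ≤ 1 := by
  simpa [pgf] using integral_mono (integrable_pow_of_le_one (μ := μ) hX hs0 hs1)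
    (integrable_const 1) fun _ => pow_le_one₀ hs0 hs1

theorem pgf_le_mul [IsProbabilityMeasure μ] {X : Ω → ℕ} (hX : Measurable X)
    (h0 : μ {ω | X ω = 0} = 0) {s : ℝ} (hs0 : 0 ≤ s) (hs1 : s ≤ 1) :
    pgf X μ s ≤ s * (μ.real {ω | X ω = 1} + (1 - μ.real {ω | X ω = 1}) * s) := by
  have hA : MeasurableSet {ω | X ω = 1} := hX (measurableSet_singleton 1)
  have hle : ∀ᵐ ω ∂μ, s ^ X ω ≤ s ^ 2 + {ω | X ω = 1}.indicator (fun _ => s - s ^ 2) ω := by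
    filter_upwards [measure_eq_zero_iff_ae_notMem.mp h0] with ω hω
    by_cases h1 : X ω = 1
    · simp [h1]
    · have h2 : 2 ≤ X ω := by have : X ω ≠ 0 := hω; omega
      simpa [h1] using pow_le_pow_of_le_one hs0 hs1 h2
  calc pgf X μ s ≤ ∫ ω, (s ^ 2 + {ω | X ω = 1}.indicator (fun _ => s - s ^ 2) ω) ∂μ :=
        integral_mono_ae (integrable_pow_of_le_one hX hs0 hs1)
          ((integrable_const _).add ((integrable_const _).indicator hA)) hle
    _ = s * (μ.real {ω | X ω = 1} + (1 - μ.real {ω | X ω = 1}) * s) := by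
        rw [integral_add (integrable_const _) ((integrable_const _).indicator hA),
          integral_const, integral_indicator_const _ hA]
        simp only [probReal_univ, smul_eq_mul]
        ring

theorem tendsto_integral_one_sub_exp_neg_mul_div {X : Ω → ℝ} (hX : Integrable X μ)
    (hX0 : ∀ ω, 0 ≤ X ω) :
    Tendsto (fun t : ℝ => ∫ ω, t⁻¹ * (1 - Real.exp (-(t * X ω))) ∂μ) (𝓝[>] 0)
      (𝓝 (∫ ω, X ω ∂μ)) := by
  refine tendsto_integral_filter_of_dominated_convergence X ?_ ?_ hX
    (ae_of_all _ fun ω => tendsto_one_sub_exp_neg_mul_div (X ω))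
  · exact Eventually.of_forall fun t => (hX.aestronglyMeasurable.aemeasurable.const_mul t
      |>.neg.exp.const_sub 1 |>.const_mul t⁻¹).aestronglyMeasurable
  · filter_upwards [self_mem_nhdsWithin] with t (ht : 0 < t)
    refine ae_of_all _ fun ω => ?_
    have hexp_le : Real.exp (-(t * X ω)) ≤ 1 := Real.exp_le_one_iff.mpr (by nlinarith [hX0 ω])
    have hexp_ge : 1 - t * X ω ≤ Real.exp (-(t * X ω)) := by
      linarith [Real.add_one_le_exp (-(t * X ω))]
    rw [Real.norm_eq_abs, abs_of_nonneg (by positivity), inv_mul_le_iff₀ ht]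
    linarith

theorem exists_pgf_lt_rpow [IsProbabilityMeasure μ] {X : Ω → ℕ} (hX : Measurable X)
    (hint : Integrable (fun ω => (X ω : ℝ)) μ) {c : ℝ} (hc : c < ∫ ω, (X ω : ℝ) ∂μ) :
    ∃ s, 0 < s ∧ s < 1 ∧ pgf X μ s < s ^ c := by
  obtain ⟨c', hcc', hc'⟩ := exists_between hc
  obtain ⟨t, ht_lt, ht0⟩ := (((tendsto_integral_one_sub_exp_neg_mul_div hint fun ω =>
    Nat.cast_nonneg _).eventually (eventually_gt_nhds hc')).and self_mem_nhdsWithin).exists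
  have ht0 : 0 < t := ht0
  have hs1 : Real.exp (-t) < 1 := Real.exp_lt_one_iff.mpr (by linarith)
  refine ⟨Real.exp (-t), Real.exp_pos _, hs1, ?_⟩
  have hpow : ∀ ω, Real.exp (-t) ^ X ω = Real.exp (-(t * X ω)) := fun ω => by
    rw [← Real.exp_nat_mul]; ring_nf
  have hint_exp : Integrable (fun ω => Real.exp (-(t * X ω))) μ := by
    simpa only [hpow] using integrable_pow_of_le_one (μ := μ) hX (Real.exp_pos _).le hs1.le
  have hpgf : pgf X μ (Real.exp (-t)) < 1 - t * c' := by
    rw [integral_const_mul, integral_sub (integrable_const 1) hint_exp, integral_const,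
      probReal_univ, one_smul, lt_inv_mul_iff₀ ht0] at ht_lt
    simp only [pgf, hpow]
    linarith
  rw [← Real.exp_mul]
  linarith [Real.add_one_le_exp (-t * c), mul_lt_mul_of_pos_left hcc' ht0]

theorem isBigO_iterate_pgf [IsProbabilityMeasure μ] {X : Ω → ℕ} (hX : Measurable X)
    (h0 : μ {ω | X ω = 0} = 0) (h1 : μ.real {ω | X ω = 1} < 1) {s r : ℝ} (hs0 : 0 ≤ s)
    (hs1 : s < 1) (hr : μ.real {ω | X ω = 1} < r) :
    (fun n => (pgf X μ)^[n] s) =O[atTop] fun n => r ^ n :=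
  isBigO_iterate_of_le_mul measureReal_nonneg h1 (fun _ hx => pgf_nonneg hx)
    (fun _ hx0 hx1 => pgf_le_mul hX h0 hx0 hx1) hs0 hs1 hr

end

section

variable {Ω : Type*} {ξ : ℕ → ℕ → Ω → ℕ} {Z : ℕ → Ω → ℕ}

abbrev offspringSigma (ξ : ℕ → ℕ → Ω → ℕ) (S : Set (ℕ × ℕ)) : MeasurableSpace Ω :=
  ⨆ q ∈ S, MeasurableSpace.comap (ξ q.1 q.2) inferInstance

theorem offspringSigma_mono {S T : Set (ℕ × ℕ)} (h : S ⊆ T) :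
    offspringSigma ξ S ≤ offspringSigma ξ T :=
  biSup_mono h

theorem measurable_offspringSigma {S : Set (ℕ × ℕ)} {n i : ℕ} (h : (n, i) ∈ S) :
    Measurable[offspringSigma ξ S] (ξ n i) :=
  Measurable.of_comap_le <|
    le_biSup (f := fun q : ℕ × ℕ => MeasurableSpace.comap (ξ q.1 q.2) inferInstance) h

theorem measurable_offspringSigma_generation (n : ℕ) :
    Measurable[offspringSigma ξ {q | q.1 = n}] (fun ω i => ξ n i ω) :=
  @measurable_pi_lambda Ω ℕ (fun _ => ℕ) (offspringSigma ξ _) _ _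
    fun _ => measurable_offspringSigma rfl

theorem measurable_sum_range : Measurable fun p : ℕ × (ℕ → ℕ) => ∑ i ∈ Finset.range p.1, p.2 i :=
  measurable_from_prod_countable_right fun k =>
    Finset.measurable_sum (Finset.range k) fun i _ => measurable_pi_apply i

theorem measurable_offspringSigma_Z (hZ0 : ∀ ω, Z 0 ω = 1)
    (hZ : ∀ n ω, Z (n + 1) ω = ∑ i ∈ Finset.range (Z n ω), ξ n i ω) (n : ℕ) :
    Measurable[offspringSigma ξ {q | q.1 < n}] (Z n) := by
  induction n with
  | zero => simp only [funext hZ0]; exact measurable_const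
  | succ n ih =>
    have hZn := ih.mono (offspringSigma_mono fun q (hq : q.1 < n) => Nat.lt_succ_of_lt hq) le_rfl
    have hrow := (measurable_offspringSigma_generation (ξ := ξ) n).mono
      (offspringSigma_mono fun q (hq : q.1 = n) => Nat.lt_succ_of_le hq.le) le_rfl
    simp only [funext (hZ n)]
    exact measurable_sum_range.comp (hZn.prodMk hrow)

variable [MeasurableSpace Ω] {μ : Measure Ω}

theorem offspringSigma_le (hξ : ∀ n i, Measurable (ξ n i)) (S : Set (ℕ × ℕ)) :
    offspringSigma ξ S ≤ ‹MeasurableSpace Ω› :=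
  iSup₂_le fun q _ => (hξ q.1 q.2).comap_le

structure IsGaltonWatson (μ : Measure Ω) (ξ : ℕ → ℕ → Ω → ℕ) (Z : ℕ → Ω → ℕ) : Prop where
  measurable_offspring : ∀ n i, Measurable (ξ n i)
  iIndepFun_offspring : iIndepFun (fun q : ℕ × ℕ => ξ q.1 q.2) μ
  identDistrib_offspring : ∀ n i, IdentDistrib (ξ n i) (ξ 0 0) μ μ
  zero : ∀ ω, Z 0 ω = 1
  succ : ∀ n ω, Z (n + 1) ω = ∑ i ∈ Finset.range (Z n ω), ξ n i ω

theorem IsGaltonWatson.measurable (hGW : IsGaltonWatson μ ξ Z) (n : ℕ) : Measurable (Z n) :=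
  (measurable_offspringSigma_Z hGW.zero hGW.succ n).mono
    (offspringSigma_le hGW.measurable_offspring _) le_rfl

theorem IsGaltonWatson.Z_one (hGW : IsGaltonWatson μ ξ Z) : Z 1 = ξ 0 0 :=
  funext fun ω => by rw [hGW.succ, hGW.zero, Finset.sum_range_one]

theorem IsGaltonWatson.indepFun_offspringSigma (hGW : IsGaltonWatson μ ξ Z)
    {S T : Set (ℕ × ℕ)} (hST : Disjoint S T) {α β : Type*} [MeasurableSpace α]
    [MeasurableSpace β] {f : Ω → α} {g : Ω → β}
    (hf : Measurable[offspringSigma ξ S] f) (hg : Measurable[offspringSigma ξ T] g) :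
    IndepFun f g μ := by
  have h := indep_iSup_of_disjoint (fun q => (hGW.measurable_offspring q.1 q.2).comap_le)
    hGW.iIndepFun_offspring.iIndep hST
  rw [IndepFun_iff_Indep]
  exact indep_of_indep_of_le_right (indep_of_indep_of_le_left h hf.comap_le) hg.comap_le

theorem IsGaltonWatson.indepFun_Z_generation (hGW : IsGaltonWatson μ ξ Z) (n : ℕ) :
    IndepFun (Z n) (fun ω i => ξ n i ω) μ :=
  hGW.indepFun_offspringSigma (Set.disjoint_left.mpr fun _ (h₁ : _ < n) h₂ => h₁.ne h₂)
    (measurable_offspringSigma_Z hGW.zero hGW.succ n) (measurable_offspringSigma_generation n)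

theorem IsGaltonWatson.pgf_offspring (hGW : IsGaltonWatson μ ξ Z) (n i : ℕ) :
    pgf (ξ n i) μ = pgf (ξ 0 0) μ :=
  funext fun s => ((hGW.identDistrib_offspring n i).comp
    (Measurable.of_discrete (f := fun j : ℕ => s ^ j))).integral_eq

theorem IsGaltonWatson.integral_pow_sum_range (hGW : IsGaltonWatson μ ξ Z) (s : ℝ) (n k : ℕ) :
    ∫ ω, s ^ (∑ i ∈ Finset.range k, ξ n i ω) ∂μ = pgf (ξ 0 0) μ s ^ k := by
  have hindep : iIndepFun (fun i : Fin k => ξ n i) μ :=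
    hGW.iIndepFun_offspring.precomp (g := fun i : Fin k => (n, (i : ℕ)))
      fun i j h => Fin.ext (Prod.ext_iff.mp h).2
  have hprod := hindep.integral_fun_prod_comp (f := fun _ j => s ^ j)
    (fun i => (hGW.measurable_offspring n i).aemeasurable)
    fun _ => Measurable.of_discrete.aestronglyMeasurable
  have hsum (ω : Ω) : ∑ i : Fin k, ξ n i ω = ∑ i ∈ Finset.range k, ξ n i ω :=
    Fin.sum_univ_eq_sum_range (fun i => ξ n i ω) k
  simp only [Finset.prod_pow_eq_pow_sum, hsum] at hprod
  change _ = ∏ i : Fin k, pgf (ξ n i) μ s at hprod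
  simp only [hprod, hGW.pgf_offspring, Finset.prod_const, Finset.card_univ, Fintype.card_fin]

theorem IsGaltonWatson.integral_comp_Z_succ [IsProbabilityMeasure μ]
    (hGW : IsGaltonWatson μ ξ Z) {h : ℕ → ℕ → ℝ} {C : ℝ} (hC : ∀ k j, |h k j| ≤ C) (n : ℕ) :
    ∫ ω, h (Z n ω) (Z (n + 1) ω) ∂μ =
      ∫ ω, ∫ ω', h (Z n ω) (∑ i ∈ Finset.range (Z n ω), ξ n i ω') ∂μ ∂μ := by
  simp only [hGW.succ]
  exact (hGW.indepFun_Z_generation n).integral_comp_eq_integral_integral (hGW.measurable n)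
    (measurable_pi_lambda _ fun i => hGW.measurable_offspring n i)
    (F := fun k r => h k (∑ i ∈ Finset.range k, r i))
    ((Measurable.of_discrete (f := Function.uncurry h)).comp
      (measurable_fst.prodMk measurable_sum_range)).stronglyMeasurable
    fun k r => hC k _

theorem IsGaltonWatson.integral_pow_Z_succ [IsProbabilityMeasure μ] (hGW : IsGaltonWatson μ ξ Z)
    {s : ℝ} (hs0 : 0 ≤ s) (hs1 : s ≤ 1) (n : ℕ) :
    ∫ ω, s ^ Z (n + 1) ω ∂μ = ∫ ω, pgf (ξ 0 0) μ s ^ Z n ω ∂μ := by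
  have hbound (k j : ℕ) : |s ^ j| ≤ 1 := by
    rw [abs_of_nonneg (pow_nonneg hs0 _)]; exact pow_le_one₀ hs0 hs1
  simpa only [hGW.integral_pow_sum_range] using
    hGW.integral_comp_Z_succ (h := fun _ j => s ^ j) hbound n

theorem IsGaltonWatson.integral_pow_Z [IsProbabilityMeasure μ] (hGW : IsGaltonWatson μ ξ Z)
    {s : ℝ} (hs0 : 0 ≤ s) (hs1 : s ≤ 1) (n : ℕ) :
    ∫ ω, s ^ Z n ω ∂μ = (pgf (ξ 0 0) μ)^[n] s := by
  induction n generalizing s with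
  | zero => simp [hGW.zero]
  | succ n ih =>
    rw [hGW.integral_pow_Z_succ hs0 hs1, ih (pgf_nonneg hs0)
      (pgf_le_one (hGW.measurable_offspring 0 0) hs0 hs1), Function.iterate_succ_apply]

theorem IsGaltonWatson.measureReal_sum_range_div_le [IsProbabilityMeasure μ]
    (hGW : IsGaltonWatson μ ξ Z) {s : ℝ} (hs0 : 0 < s) (hs1 : s ≤ 1) (c : ℝ) (n k : ℕ) :
    μ.real {ω | ((∑ i ∈ Finset.range k, ξ n i ω : ℕ) : ℝ) / k ≤ c} ≤
      (pgf (ξ 0 0) μ s / s ^ c) ^ k := by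
  set S : Ω → ℕ := fun ω => ∑ i ∈ Finset.range k, ξ n i ω
  have hS : Measurable S := Finset.measurable_sum _ fun i _ => hGW.measurable_offspring n i
  have hsub : {ω | (S ω : ℝ) / k ≤ c} ⊆ {ω | s ^ (c * k) ≤ s ^ S ω} := fun ω (hω : _ ≤ c) => by
    rcases k.eq_zero_or_pos with rfl | hk
    · simp [S]
    · rw [div_le_iff₀ (by positivity)] at hω
      show s ^ (c * k) ≤ s ^ S ω
      simpa only [← Real.rpow_natCast] using
        Real.rpow_le_rpow_of_exponent_ge hs0 hs1 hω
  have hmarkov := mul_meas_ge_le_integral_of_nonneg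
    (ae_of_all μ fun ω => pow_nonneg hs0.le (S ω)) (integrable_pow_of_le_one hS hs0.le hs1)
    (s ^ (c * k))
  rw [hGW.integral_pow_sum_range, ← le_div_iff₀' (by positivity)] at hmarkov
  calc μ.real {ω | (S ω : ℝ) / k ≤ c} ≤ μ.real {ω | s ^ (c * k) ≤ s ^ S ω} :=
        measureReal_mono hsub
    _ ≤ pgf (ξ 0 0) μ s ^ k / s ^ (c * k) := hmarkov
    _ = (pgf (ξ 0 0) μ s / s ^ c) ^ k := by
      rw [div_pow, Real.rpow_mul hs0.le, Real.rpow_natCast]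

theorem IsGaltonWatson.measureReal_div_le_le_iterate_pgf [IsProbabilityMeasure μ]
    (hGW : IsGaltonWatson μ ξ Z) {s c : ℝ} (hs0 : 0 < s) (hs1 : s ≤ 1)
    (hsc : pgf (ξ 0 0) μ s ≤ s ^ c) (n : ℕ) :
    μ.real {ω | (Z (n + 1) ω : ℝ) / Z n ω ≤ c} ≤
      (pgf (ξ 0 0) μ)^[n] (pgf (ξ 0 0) μ s / s ^ c) := by
  set ρ := pgf (ξ 0 0) μ s / s ^ c
  have hρ0 : 0 ≤ ρ := div_nonneg (pgf_nonneg hs0.le) (by positivity)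
  have hρ1 : ρ ≤ 1 := div_le_one_of_le₀ hsc (by positivity)
  have hind (P : Ω → Prop) [DecidablePred P] (hP : MeasurableSet {ω | P ω}) :
      ∫ ω, (if P ω then (1 : ℝ) else 0) ∂μ = μ.real {ω | P ω} := by
    simpa [Set.indicator_apply] using integral_indicator_one (μ := μ) hP
  have hbound (k j : ℕ) : |(if (j : ℝ) / k ≤ c then (1 : ℝ) else 0)| ≤ 1 := by
    split_ifs <;> simp
  have hE : MeasurableSet {ω | (Z (n + 1) ω : ℝ) / Z n ω ≤ c} := by
    have := hGW.measurable n
    have := hGW.measurable (n + 1)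
    exact measurableSet_le (by fun_prop) measurable_const
  calc μ.real {ω | (Z (n + 1) ω : ℝ) / Z n ω ≤ c}
      = ∫ ω, (if (Z (n + 1) ω : ℝ) / Z n ω ≤ c then (1 : ℝ) else 0) ∂μ := (hind _ hE).symm
    _ = ∫ ω, μ.real {ω' | ((∑ i ∈ Finset.range (Z n ω), ξ n i ω' : ℕ) : ℝ) / Z n ω ≤ c} ∂μ := by
        rw [hGW.integral_comp_Z_succ hbound n]
        refine integral_congr_ae
          (ae_of_all _ fun ω => hind _ (measurableSet_le ?_ measurable_const))
        have := hGW.measurable_offspring n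
        fun_prop
    _ ≤ ∫ ω, ρ ^ Z n ω ∂μ :=
        integral_mono_of_nonneg (ae_of_all _ fun _ => measureReal_nonneg)
          (integrable_pow_of_le_one (hGW.measurable n) hρ0 hρ1)
          (ae_of_all _ fun ω => hGW.measureReal_sum_range_div_le hs0 hs1 c n (Z n ω))
    _ = (pgf (ξ 0 0) μ)^[n] ρ := hGW.integral_pow_Z hρ0 hρ1 n


theorem IsGaltonWatson.isBigO_measureReal_div_le [IsProbabilityMeasure μ]
    (hGW : IsGaltonWatson μ ξ Z) (hint : Integrable (fun ω => (ξ 0 0 ω : ℝ)) μ) {c : ℝ}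
    (hc : c < ∫ ω, (ξ 0 0 ω : ℝ) ∂μ) (h0 : μ {ω | ξ 0 0 ω = 0} = 0)
    (h1 : μ.real {ω | ξ 0 0 ω = 1} < 1) {r : ℝ} (hr : μ.real {ω | ξ 0 0 ω = 1} < r) :
    (fun n => μ.real {ω | (Z (n + 1) ω : ℝ) / Z n ω ≤ c}) =O[atTop] fun n => r ^ n := by
  obtain ⟨s, hs0, hs1, hs⟩ := exists_pgf_lt_rpow (hGW.measurable_offspring 0 0) hint hc
  have hρ0 : 0 ≤ pgf (ξ 0 0) μ s / s ^ c := div_nonneg (pgf_nonneg hs0.le) (by positivity)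
  have hρ1 : pgf (ξ 0 0) μ s / s ^ c < 1 := (div_lt_one (by positivity)).mpr hs
  refine (isBigO_of_le _ fun n => ?_).trans
    (isBigO_iterate_pgf (hGW.measurable_offspring 0 0) h0 h1 hρ0 hρ1 hr)
  rw [Real.norm_of_nonneg measureReal_nonneg]
  exact (hGW.measureReal_div_le_le_iterate_pgf hs0 hs1.le hs.le n).trans (Real.le_norm_self _)

end

end ProbabilityTheory

theorem lotka_nagaev_lower_deviation_rate_general
    {Ω : Type} [MeasurableSpace Ω] (μ : Measure Ω) [IsProbabilityMeasure μ]
    -- the offspring variables: `ξ n i` is the number of children of the `i`-th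
    -- individual of generation `n`; they are i.i.d. with law `p`
    (ξ : ℕ → ℕ → Ω → ℕ) (hξmeas : ∀ n i, Measurable (ξ n i))
    (hξiid : iIndepFun (fun ni : ℕ × ℕ => ξ ni.1 ni.2) μ)
    (p : ℕ → ℝ) (hξdist : ∀ n i k, (μ {w | ξ n i w = k}).toReal = p k)
    -- the Galton-Watson process
    (Z : ℕ → Ω → ℕ) (hZ0 : ∀ w, Z 0 w = 1)
    (hZrec : ∀ n w, Z (n + 1) w = ∑ i ∈ Finset.range (Z n w), ξ n i w)
    (hp0 : p 0 = 0) (hp1pos : 0 < p 1) (hp1lt : p 1 < 1)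
    -- the offspring mean `m = E[Z₁] ∈ (1, ∞)` and `E[Z₁ log Z₁] < ∞`
    (m : ℝ) (hm1 : 1 < m) (hmdef : ∫ w, (Z 1 w : ℝ) ∂μ = m)
    -- the Schröder constant `γ > 0`, defined by `p₁ = m ^ (-γ)`
    (γ : ℝ) (hγdef : p 1 = m ^ (-γ))
    -- regularly varying tail of the offspring law: `P(Z₁ > x) ~ x^(-β) L(x)`
    (β : ℝ) (L : ℝ → ℝ) (hLpos : ∀ x : ℝ, 0 < x → 0 < L x)
    (hLslow : ∀ c : ℝ, 0 < c → Tendsto (fun x => L (c * x) / L x) atTop (𝓝 1))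
    (hγβ : γ > β - 1)
    :
    ∀ ε : ℝ, 0 < ε →
      Tendsto (fun n : ℕ =>
          m ^ ((β - 1) * (n : ℝ)) / L (m ^ (n : ℝ)) *
            (μ {w | ε ≤ m - (Z (n + 1) w : ℝ) / (Z n w : ℝ)}).toReal)
        atTop (𝓝 0) := by
  intro ε hε
  have hGW : IsGaltonWatson μ ξ Z :=
    ⟨hξmeas, hξiid, fun n i => identDistrib_of_forall_measureReal_eq (hξmeas n i) (hξmeas 0 0)
      fun k => (hξdist n i k).trans (hξdist 0 0 k).symm, hZ0, hZrec⟩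
  have hm0 : 0 < m := by linarith
  have hmean : ∫ ω, (ξ 0 0 ω : ℝ) ∂μ = m := hGW.Z_one ▸ hmdef
  have hp1 : μ.real {ω | ξ 0 0 ω = 1} = p 1 := hξdist 0 0 1
  have hKp : m ^ (β - 1) * p 1 < 1 := by
    rw [hγdef, ← Real.rpow_add hm0]
    exact Real.rpow_lt_one_of_one_lt_of_neg hm1 (by linarith)
  obtain ⟨r, lam, hpr, hlam1, hq⟩ := exists_lt_one_lt_mul_mem_Ico (by positivity) hp1pos.le hKp
  have hP : (fun n => μ.real {ω | ε ≤ m - (Z (n + 1) ω : ℝ) / Z n ω}) =O[atTop] (r ^ ·) := by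
    simpa only [le_sub_comm] using hGW.isBigO_measureReal_div_le
      (.of_integral_ne_zero (by linarith)) (c := m - ε) (by linarith)
      ((measureReal_eq_zero_iff).mp ((hξdist 0 0 0).trans hp0)) (hp1 ▸ hp1lt) (hp1 ▸ hpr)
  have hL := isBigO_inv_comp_pow_of_tendsto_div hm1 hLpos (hLslow m hm0) hlam1
  have hgeom : Tendsto (fun n : ℕ => (m ^ (β - 1)) ^ n * lam ^ n * r ^ n) atTop (𝓝 0) := by
    simpa only [← mul_pow] using tendsto_pow_atTop_nhds_zero_of_lt_one hq.1 hq.2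
  refine ((((isBigO_refl (fun n : ℕ => (m ^ (β - 1)) ^ n) atTop).mul hL).mul hP).trans_tendsto
    hgeom).congr fun n => ?_
  rw [Real.rpow_mul hm0.le, Real.rpow_natCast, Real.rpow_natCast, div_eq_mul_inv]
  rfl

theorem lotka_nagaev_lower_deviation_rate
    {Ω : Type} [MeasurableSpace Ω] (μ : Measure Ω) [IsProbabilityMeasure μ]
    -- the offspring variables: `ξ n i` is the number of children of the `i`-th
    -- individual of generation `n`; they are i.i.d. with law `p`
    (ξ : ℕ → ℕ → Ω → ℕ) (hξmeas : ∀ n i, Measurable (ξ n i))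
    (hξiid : iIndepFun (fun ni : ℕ × ℕ => ξ ni.1 ni.2) μ)
    (p : ℕ → ℝ) (hξdist : ∀ n i k, (μ {w | ξ n i w = k}).toReal = p k)
    -- the Galton-Watson process
    (Z : ℕ → Ω → ℕ) (hZ0 : ∀ w, Z 0 w = 1)
    (hZrec : ∀ n w, Z (n + 1) w = ∑ i ∈ Finset.range (Z n w), ξ n i w)
    (hp0 : p 0 = 0) (hp1pos : 0 < p 1) (hp1lt : p 1 < 1)
    -- the offspring mean `m = E[Z₁] ∈ (1, ∞)` and `E[Z₁ log Z₁] < ∞`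
    (m : ℝ) (hm1 : 1 < m) (hmdef : ∫ w, (Z 1 w : ℝ) ∂μ = m)
    (hZlogZ : Integrable (fun w => (Z 1 w : ℝ) * Real.log (Z 1 w)) μ)
    -- the Schröder constant `γ > 0`, defined by `p₁ = m ^ (-γ)`
    (γ : ℝ) (hγpos : 0 < γ) (hγdef : p 1 = m ^ (-γ))
    -- the martingale limit `W = lim Zₙ / mⁿ`, with continuous density `ω0` on `(0, ∞)`
    (W : Ω → ℝ) (hW : ∀ᵐ w ∂μ, Tendsto (fun n : ℕ => (Z n w : ℝ) / m ^ (n : ℝ)) atTop (𝓝 (W w)))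
    (ω0 : ℝ → ℝ) (hω0cont : ContinuousOn ω0 (Ioi 0)) (hω0nonneg : ∀ u : ℝ, 0 < u → 0 ≤ ω0 u)
    (hWdens : ∀ x : ℝ, 0 ≤ x → (μ {w | x ≤ W w}).toReal = ∫ u in Ioi x, ω0 u)
    -- regularly varying tail of the offspring law: `P(Z₁ > x) ~ x^(-β) L(x)`
    (β : ℝ) (L : ℝ → ℝ) (hLpos : ∀ x : ℝ, 0 < x → 0 < L x)
    (hLslow : ∀ c : ℝ, 0 < c → Tendsto (fun x => L (c * x) / L x) atTop (𝓝 1))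
    (htailZ : Tendsto (fun x : ℝ =>
      (μ {w | x < (Z 1 w : ℝ)}).toReal / (x ^ (-β) * L x)) atTop (𝓝 1))
    (hβ1 : 1 < β) (hβ2 : β < 2)
    -- `X₁ = Z₁ - m` lies in the domain of attraction of a strictly `β`-stable law
    (b : ℝ → ℝ) (hbcont : Continuous b) (hbmono : StrictMonoOn b (Ici 0)) (hb0 : b 0 = 0)
    (s : ℝ → ℝ) (hbs : ∀ x : ℝ, 0 < x → b x = x ^ β⁻¹ * s x)
    (hsslow : ∀ c : ℝ, 0 < c → Tendsto (fun x => s (c * x) / s x) atTop (𝓝 1))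
    (hsliminf : ∃ c : ℝ, 0 < c ∧ ∀ᶠ x in atTop, c ≤ s x)
    (U : Ω → ℝ) (hUmeas : Measurable U)
    (hconv : ∀ x : ℝ, ContinuousAt (fun y => (μ {w | U w ≤ y}).toReal) x →
      Tendsto (fun k : ℕ => (μ {w | (∑ i ∈ Finset.range k, ((ξ 0 i w : ℝ) - m)) / b (k : ℝ) ≤ x}).toReal)
        atTop (𝓝 ((μ {w | U w ≤ x}).toReal)))
    (hstable : ∀ a c : ℝ, 0 < a → 0 < c →
      mconv (μ.map (fun w => a * U w)) (μ.map (fun w => c * U w)) =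
        μ.map (fun w => (a ^ β + c ^ β) ^ β⁻¹ * U w))
    (hFratio : Filter.limsup (fun n : ℕ =>
      (μ {w | (ξ 0 0 w : ℝ) - m ≤ -(b (n : ℝ) / (Real.log (n : ℝ)) ^ β⁻¹)}).toReal /
        (Real.log (n : ℝ) * (μ {w | (ξ 0 0 w : ℝ) - m ≤ -(b (n : ℝ))}).toReal)) atTop ≤ 1)
    (hγβ : γ > β - 1)
    :
    ∀ ε : ℝ, 0 < ε →
      Tendsto (fun n : ℕ =>
          m ^ ((β - 1) * (n : ℝ)) / L (m ^ (n : ℝ)) *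
            (μ {w | ε ≤ m - (Z (n + 1) w : ℝ) / (Z n w : ℝ)}).toReal)
        atTop (𝓝 0) :=
  lotka_nagaev_lower_deviation_rate_general μ ξ hξmeas hξiid p hξdist Z hZ0 hZrec hp0 hp1pos hp1lt m
    hm1 hmdef γ hγdef β L hLpos hLslow hγβ
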